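/- Let b ∈ (1, √(3/2)), a ∈ (0, 1/3) with a·b³/(1−a·b) < δ and b²(1−3δ) < 1−2δ for some δ > 0 with δ ≤ 1/12. Then for every n ≥ 2: b²·(1−3δ) + δ + b^{n+1}·Σ_{j=0}^{n−2} b^{−j}·a^{n−j−1} ≤ 1. -/

import Mathlib

open Finset

/-- Reversing the order of summation turns the weighted sum into a geometric series in `a * b`. -/
lemma pow_succ_mul_sum_rpow_neg_mul_pow_eq {b : ℝ} (hb : 0 < b) (a : ℝ) (n : ℕ) :
    b ^ (n + 1) * ∑ j ∈ range (n - 1), b ^ (-(j : ℝ)) * a ^ (n - j - 1)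
      = a * b ^ 3 * ∑ k ∈ range (n - 1), (a * b) ^ k := by
  cases n with
  | zero => simp
  | succ N =>
    rw [Nat.add_sub_cancel, mul_sum, mul_sum]
    conv_rhs => rw [← sum_range_reflect]
    refine sum_congr rfl fun j hj => ?_
    obtain ⟨k, rfl⟩ := Nat.exists_eq_add_of_lt (mem_range.mp hj)
    have hexp : j + k + 1 + 1 - j - 1 = k + 1 := by omega
    have hidx : j + k + 1 - 1 - j = k := by omega
    rw [hexp, hidx, Real.rpow_neg hb.le, Real.rpow_natCast]
    field_simp
    ring

theorem stmt13_general (a b δ : ℝ) (ha : 0 < a) (ha' : a < 1/3)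
    (hb : 1 < b) (hb' : b < Real.sqrt (3/2))
    (h3 : a * b ^ 3 / (1 - a * b) < δ)
    (h1 : b ^ 2 * (1 - 3 * δ) < 1 - 2 * δ) :
    ∀ n : ℕ, 2 ≤ n →
      b ^ 2 * (1 - 3 * δ) + δ +
        b ^ (n + 1 : ℕ) * ∑ j ∈ Finset.range (n - 1), b ^ (-(j : ℝ)) * a ^ (n - j - 1)
      ≤ 1 := by
  intro n _
  have hb0 : 0 < b := by linarith
  have hb_sq : b ^ 2 < 3 / 2 := (Real.lt_sqrt hb0.le).mp hb'
  have hab : a * b < 1 := by nlinarith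
  have hab0 : 0 ≤ a * b := by positivity
  have hgeom : ∑ k ∈ range (n - 1), (a * b) ^ k ≤ 1 / (1 - a * b) := by
    rw [range_eq_Ico]
    simpa using geom_sum_Ico_le_of_lt_one (m := 0) (n := n - 1) hab0 hab
  calc b ^ 2 * (1 - 3 * δ) + δ +
        b ^ (n + 1) * ∑ j ∈ range (n - 1), b ^ (-(j : ℝ)) * a ^ (n - j - 1)
      = b ^ 2 * (1 - 3 * δ) + δ + a * b ^ 3 * ∑ k ∈ range (n - 1), (a * b) ^ k := by
        rw [pow_succ_mul_sum_rpow_neg_mul_pow_eq hb0]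
    _ ≤ b ^ 2 * (1 - 3 * δ) + δ + a * b ^ 3 * (1 / (1 - a * b)) := by
        gcongr _ + _ * ?_
    _ ≤ 1 := by rw [mul_one_div]; linarith

/-- for `n ≥ 2`,
`b²(1−3δ) + δ + b^{n+1}·Σ_{j=0}^{n−2} b^{−j}·a^{n−j−1} ≤ 1`. -/
theorem stmt13 (a b δ : ℝ) (ha : 0 < a) (ha' : a < 1/3)
    (hb : 1 < b) (hb' : b < Real.sqrt (3/2))
    (hδ : 0 < δ) (hδ' : δ ≤ 1/12)
    (h3 : a * b ^ 3 / (1 - a * b) < δ)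
    (h1 : b ^ 2 * (1 - 3 * δ) < 1 - 2 * δ) :
    ∀ n : ℕ, 2 ≤ n →
      b ^ 2 * (1 - 3 * δ) + δ +
        b ^ (n + 1 : ℕ) * ∑ j ∈ Finset.range (n - 1), b ^ (-(j : ℝ)) * a ^ (n - j - 1)
      ≤ 1 :=
  stmt13_general a b δ ha ha' hb hb' h3 h1
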